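/- The 4-dimensional complex algebra L⁴₀₉ with basis e₁,e₂,e₃,e₄ and nonzero products e₁e₂ = e₃, e₁e₃ = -2e₄, e₂e₁ = -e₃, e₃e₁ = e₄ is a nilpotent left-symmetric algebra that is not a Novikov algebra. -/

import Mathlib

/-!
Left symmetry is a polynomial identity in the coordinates. For nilpotency, give `e₁, e₂`
weight `0`, `e₃` weight `1` and `e₄` weight `2`. A product of elements of weights at
least `i` and `j` has weight at least `i + j + 1`. Hence every product of `n + 1`
elements has weight at least `n`, and products of four elements vanish. The Novikov identity
fails at `(e₁e₂)e₁ = e₄ ≠ 0 = (e₁e₁)e₂`.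
-/

/-- Span of the set of products of an element of `S` with an element of `T`. -/
def mulSpan {V : Type*} [AddCommGroup V] [Module ℂ V] (mul : V → V → V)
    (S T : Submodule ℂ V) : Submodule ℂ V :=
  Submodule.span ℂ {z | ∃ x ∈ S, ∃ y ∈ T, z = mul x y}

/-- `piece mul n` is the span of all products of `n + 1` elements of the
algebra `(V, mul)`, with all possible bracketings. -/
def piece {V : Type*} [AddCommGroup V] [Module ℂ V] (mul : V → V → V) : ℕ → Submodule ℂ V
  | 0 => ⊤
  | n + 1 => ⨆ i : Fin (n + 1), mulSpan mul (piece mul i.1) (piece mul (n - i.1))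

/-- An algebra is nilpotent if some power (with all bracketings) is zero. -/
def IsNilpotentMul {V : Type*} [AddCommGroup V] [Module ℂ V] (mul : V → V → V) : Prop :=
  ∃ n : ℕ, piece mul n = ⊥

/-- Multiplication of the algebra `L⁴₀₉`: on the basis `e₁, e₂, e₃, e₄`
(indexed `0,…,3`) the nonzero products are
`e₁e₂ = e₃`, `e₁e₃ = -2e₄`, `e₂e₁ = -e₃`, `e₃e₁ = e₄`. -/
def mulL409 (x y : Fin 4 → ℂ) : Fin 4 → ℂ :=
  ![0, 0, x 0 * y 1 - x 1 * y 0, -2 * (x 0 * y 2) + x 2 * y 0]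

section Filtration

variable {V : Type*} [AddCommGroup V] [Module ℂ V] {mul : V → V → V}

theorem mulSpan_le_iff {S T U : Submodule ℂ V} :
    mulSpan mul S T ≤ U ↔ ∀ x ∈ S, ∀ y ∈ T, mul x y ∈ U := by
  rw [mulSpan, Submodule.span_le]
  constructor
  · exact fun h x hx y hy => h ⟨x, hx, y, hy, rfl⟩
  · rintro h _ ⟨x, hx, y, hy, rfl⟩
    exact h x hx y hy

theorem piece_le_of_mul_mem {F : ℕ → Submodule ℂ V} (hF₀ : F 0 = ⊤)
    (hmul : ∀ i j x y, x ∈ F i → y ∈ F j → mul x y ∈ F (i + j + 1)) :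
    ∀ n, piece mul n ≤ F n
  | 0 => by rw [piece, hF₀]
  | n + 1 => by
    rw [piece, iSup_le_iff]
    intro i
    have hi : i.1 + (n - i.1) + 1 = n + 1 := by omega
    refine mulSpan_le_iff.2 fun x hx y hy => hi ▸ hmul _ _ x y ?_ ?_
    · exact piece_le_of_mul_mem hF₀ hmul i.1 hx
    · exact piece_le_of_mul_mem hF₀ hmul _ hy

theorem isNilpotentMul_of_filtration {F : ℕ → Submodule ℂ V} (hF₀ : F 0 = ⊤)
    (hmul : ∀ i j x y, x ∈ F i → y ∈ F j → mul x y ∈ F (i + j + 1)) {n : ℕ}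
    (hn : F n = ⊥) : IsNilpotentMul mul :=
  ⟨n, le_bot_iff.1 (hn ▸ piece_le_of_mul_mem hF₀ hmul n)⟩

end Filtration

namespace L409

def weight : Fin 4 → ℕ := ![0, 0, 1, 2]

def weightFiltration (n : ℕ) : Submodule ℂ (Fin 4 → ℂ) :=
  Submodule.pi {k | weight k < n} fun _ => ⊥

theorem mem_weightFiltration {n : ℕ} {v : Fin 4 → ℂ} :
    v ∈ weightFiltration n ↔ ∀ k, weight k < n → v k = 0 := by
  simp [weightFiltration, Submodule.mem_pi]

theorem weightFiltration_zero : weightFiltration 0 = ⊤ :=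
  eq_top_iff.2 fun _ _ => mem_weightFiltration.2 fun _ hk => absurd hk (Nat.not_lt_zero _)

theorem weightFiltration_three : weightFiltration 3 = ⊥ := by
  refine eq_bot_iff.2 fun v hv => (Submodule.mem_bot ℂ).2 (funext fun k => ?_)
  exact mem_weightFiltration.1 hv k (by fin_cases k <;> simp [weight])

theorem mul_mem_weightFiltration {i j : ℕ} {x y : Fin 4 → ℂ} (hx : x ∈ weightFiltration i)
    (hy : y ∈ weightFiltration j) : mulL409 x y ∈ weightFiltration (i + j + 1) := by
  rw [mem_weightFiltration] at *
  have hx0 : 0 < i → x 0 = 0 := hx 0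
  have hx1 : 0 < i → x 1 = 0 := hx 1
  have hx2 : 1 < i → x 2 = 0 := hx 2
  have hy0 : 0 < j → y 0 = 0 := hy 0
  have hy1 : 0 < j → y 1 = 0 := hy 1
  have hy2 : 1 < j → y 2 = 0 := hy 2
  intro k hk
  fin_cases k
  · rfl
  · rfl
  · obtain hi | hj : 0 < i ∨ 0 < j := by simp [weight] at hk; omega
    · simp [mulL409, hx0 hi, hx1 hi]
    · simp [mulL409, hy0 hj, hy1 hj]
  · obtain hi | hj | ⟨hi, hj⟩ : 1 < i ∨ 1 < j ∨ (0 < i ∧ 0 < j) := by simp [weight] at hk; omega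
    · simp [mulL409, hx0 (by omega), hx2 hi]
    · simp [mulL409, hy0 (by omega), hy2 hj]
    · simp [mulL409, hx0 hi, hy0 hj]

theorem mulL409_leftSymmetric (x y z : Fin 4 → ℂ) :
    mulL409 (mulL409 x y) z - mulL409 x (mulL409 y z) =
      mulL409 (mulL409 y x) z - mulL409 y (mulL409 x z) := by
  funext k
  fin_cases k <;> simp [mulL409]
  ring

theorem isNilpotentMul_mulL409 : IsNilpotentMul mulL409 :=
  isNilpotentMul_of_filtration weightFiltration_zero
    (fun _ _ _ _ => mul_mem_weightFiltration) weightFiltration_three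

end L409

/-- `L⁴₀₉` is a nilpotent left-symmetric algebra that is not a
Novikov algebra. -/
theorem L409_nilpotent_leftSymmetric_not_novikov :
    (∀ x y z : Fin 4 → ℂ,
      mulL409 (mulL409 x y) z - mulL409 x (mulL409 y z) =
      mulL409 (mulL409 y x) z - mulL409 y (mulL409 x z)) ∧
    IsNilpotentMul mulL409 ∧
    ¬ (∀ x y z : Fin 4 → ℂ, mulL409 (mulL409 x y) z = mulL409 (mulL409 x z) y) := by
  refine ⟨L409.mulL409_leftSymmetric, L409.isNilpotentMul_mulL409, fun hNovikov => ?_⟩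
  have h := congrFun (hNovikov ![1, 0, 0, 0] ![0, 1, 0, 0] ![1, 0, 0, 0]) 3
  simp [mulL409] at h
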